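/- arXiv:1108.5021 — 2 statements merged into one kernel-verified Lean document; each statement's English description precedes it below -/
import Mathlib

section
/- Let M be a unital abelian subring of a unital ring B. If M equals its relative double commutant in B (i.e., M = (M,B)''), then M is an intersection of maximal abelian subrings of B. -/
/-- A subring is maximal abelian if it is commutative and maximal among
commutative subrings. -/
def IsMaximalAbelianSubring {B : Type*} [Ring B] (W : Subring B) : Prop :=
  (∀ x ∈ W, ∀ y ∈ W, x * y = y * x) ∧
    ∀ W' : Subring B, (∀ x ∈ W', ∀ y ∈ W', x * y = y * x) → W ≤ W' → W = W'

/-!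
For a commuting set `s`, the double commutant `s''` is the intersection of the maximal abelian
subrings containing `s`. An element of `s''` commutes with every such `W` (as `W ⊆ s'`), hence
lies in `W` by maximality. Conversely, if `x` lies in all of them and `t ∈ s'`, then `s ∪ {t}`
commutes, so by Zorn it sits in a maximal abelian `W`, which contains both `x` and `t`; thus `x`
commutes with `t`.
-/

section

variable {B : Type*} [Ring B]

theorem mul_comm_of_mem_insert {s : Set B} {t : B} (hs : ∀ x ∈ s, ∀ y ∈ s, x * y = y * x)
    (ht : t ∈ s.centralizer) : ∀ x ∈ insert t s, ∀ y ∈ insert t s, x * y = y * x := by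
  rintro x (rfl | hx) y (rfl | hy)
  · rfl
  · exact (ht y hy).symm
  · exact ht x hx
  · exact hs x hx y hy

theorem Subring.mul_comm_of_mem_sSup {c : Set (Subring B)} (hne : c.Nonempty)
    (hdir : DirectedOn (· ≤ ·) c) (hc : ∀ W ∈ c, ∀ x ∈ W, ∀ y ∈ W, x * y = y * x) :
    ∀ x ∈ sSup c, ∀ y ∈ sSup c, x * y = y * x := by
  intro x hx y hy
  rw [Subring.mem_sSup_of_directedOn hne hdir] at hx hy
  obtain ⟨U, hU, hxU⟩ := hx
  obtain ⟨V, hV, hyV⟩ := hy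
  obtain ⟨W, hW, hUW, hVW⟩ := hdir U hU V hV
  exact hc W hW x (hUW hxU) y (hVW hyV)

theorem exists_isMaximalAbelianSubring_superset {s : Set B}
    (hs : ∀ x ∈ s, ∀ y ∈ s, x * y = y * x) :
    ∃ W : Subring B, IsMaximalAbelianSubring W ∧ s ⊆ W := by
  obtain ⟨W, hsW, hW⟩ := zorn_le_nonempty₀ {W : Subring B | ∀ x ∈ W, ∀ y ∈ W, x * y = y * x}
    (fun c hc hchain W hW =>
      ⟨sSup c, Subring.mul_comm_of_mem_sSup ⟨W, hW⟩ hchain.directedOn hc, fun _ => le_sSup⟩)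
    (Subring.centralizer s.centralizer) (Set.centralizer_centralizer_comm_of_comm hs)
  exact ⟨W, ⟨hW.1, fun W' hW' hle => le_antisymm hle (hW.2 hW' hle)⟩,
    Set.subset_centralizer_centralizer.trans hsW⟩

theorem IsMaximalAbelianSubring.mem_of_mem_centralizer {W : Subring B}
    (hW : IsMaximalAbelianSubring W) {y : B} (hy : y ∈ (W : Set B).centralizer) : y ∈ W := by
  obtain ⟨W', hW', hsub⟩ := exists_isMaximalAbelianSubring_superset (mul_comm_of_mem_insert hW.1 hy)
  have hWW' : W = W' := hW.2 W' hW'.1 ((Set.subset_insert y _).trans hsub)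
  exact hWW' ▸ hsub (Set.mem_insert y _)

theorem centralizer_centralizer_eq_iInter_isMaximalAbelianSubring {s : Set B}
    (hs : ∀ x ∈ s, ∀ y ∈ s, x * y = y * x) :
    (Subring.centralizer (Subring.centralizer s : Set B) : Set B) =
      ⋂ W ∈ {W : Subring B | IsMaximalAbelianSubring W ∧ s ⊆ W}, (W : Set B) := by
  ext x
  simp only [Set.mem_iInter]
  constructor
  · rintro hx W ⟨hW, hsW⟩
    exact hW.mem_of_mem_centralizer fun w hw => hx w fun a ha => hW.1 a (hsW ha) w hw
  · intro hx t ht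
    obtain ⟨W, hW, hsub⟩ := exists_isMaximalAbelianSubring_superset (mul_comm_of_mem_insert hs ht)
    exact hW.1 t (hsub (Set.mem_insert t s)) x
      (hx W ⟨hW, (Set.subset_insert t s).trans hsub⟩)

end

/-- If a unital abelian subring `M` of a unital ring `B` equals its relative double
commutant in `B`, then `M` is an intersection of maximal abelian subrings of `B`. -/
theorem abelian_subring_eq_double_commutant_imp_inter_of_maximal_abelian
    {B : Type*} [Ring B] (M : Subring B)
    (habel : ∀ x ∈ M, ∀ y ∈ M, x * y = y * x)
    (hdc : (M : Set B) =
      (Subring.centralizer ((Subring.centralizer (M : Set B) : Subring B) : Set B) : Set B)) :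
    ∃ 𝒞 : Set (Subring B), (∀ W ∈ 𝒞, IsMaximalAbelianSubring W) ∧
      (M : Set B) = ⋂ W ∈ 𝒞, (W : Set B) :=
  ⟨{W | IsMaximalAbelianSubring W ∧ (M : Set B) ⊆ W}, fun _ hW => hW.1,
    hdc.trans (centralizer_centralizer_eq_iInter_isMaximalAbelianSubring habel)⟩
end

section
/- Every von Neumann algebra is centrally prime: if x, y ∈ B with 0 ≤ x,y ≤ 1 and xBy = {0}, then there is a central element e with x ≤ e ≤ 1 and y ≤ 1 - e ≤ 1. -/
/-!
Let `e` be the central carrier of `x`: the projection onto the closed span of `B (x H)`. Its range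
is invariant under `B` and under `B'`, so by the double commutant theorem `e ∈ B ∩ B'`. It fixes
`x`, and `x B y = 0` makes `B (x H)` orthogonal to `y H`, so `e y = 0`. Conjugating `x ≤ 1` by `e`
and `y ≤ 1` by `1 - e` gives `x ≤ e` and `y ≤ 1 - e`.
-/

open ContinuousLinearMap Submodule

section StarOrderedRing

variable {R : Type*} [Ring R] [PartialOrder R] [StarRing R] [StarOrderedRing R]

theorem IsSelfAdjoint.of_le_one {a : R} (ha : a ≤ 1) : IsSelfAdjoint a :=
  (IsSelfAdjoint.iff_of_le ha).2 (.one R)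

theorem IsStarProjection.le_of_mul_eq_self {p a : R} (hp : IsStarProjection p) (ha : a ≤ 1)
    (hpa : p * a = a) : a ≤ p := by
  have hap : a * p = a := by
    simpa [(IsSelfAdjoint.of_le_one ha).star_eq, hp.isSelfAdjoint.star_eq]
      using congr(star $hpa)
  simpa [hpa, hap, hp.isIdempotentElem.eq] using hp.isSelfAdjoint.conjugate_le_conjugate ha

end StarOrderedRing

theorem Submodule.topologicalClosure_span_mem_invtSubmodule {𝕜 E : Type*} [Semiring 𝕜]
    [TopologicalSpace 𝕜] [AddCommMonoid E] [TopologicalSpace E] [Module 𝕜 E]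
    [ContinuousSMul 𝕜 E] [ContinuousAdd E] {s : Set E} {T : E →L[𝕜] E} (hT : Set.MapsTo T s s) :
    (span 𝕜 s).topologicalClosure ∈ Module.End.invtSubmodule T := by
  refine topologicalClosure_mem_invtSubmodule ?_
  rw [Module.End.mem_invtSubmodule_iff_map_le, map_span]
  exact span_mono (Set.mapsTo_iff_image_subset.1 hT)

namespace VonNeumannAlgebra

variable {H : Type*} [NormedAddCommGroup H] [InnerProductSpace ℂ H] [CompleteSpace H]

def carrierSubspace (B : VonNeumannAlgebra H) (x : H →L[ℂ] H) : Submodule ℂ H :=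
  (span ℂ {η | ∃ b ∈ B, ∃ ξ, b (x ξ) = η}).topologicalClosure

instance (B : VonNeumannAlgebra H) (x : H →L[ℂ] H) : CompleteSpace (carrierSubspace B x) :=
  topologicalClosure.completeSpace _

noncomputable def centralCarrier (B : VonNeumannAlgebra H) (x : H →L[ℂ] H) : H →L[ℂ] H :=
  (carrierSubspace B x).starProjection

variable {B : VonNeumannAlgebra H} {x : H →L[ℂ] H}

theorem carrierSubspace_mem_invtSubmodule {z : H →L[ℂ] H} (hz : z ∈ B) :
    carrierSubspace B x ∈ Module.End.invtSubmodule z :=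
  topologicalClosure_span_mem_invtSubmodule fun _ ⟨b, hb, ξ, hη⟩ ↦
    ⟨z * b, mul_mem hz hb, ξ, hη ▸ rfl⟩

theorem carrierSubspace_mem_invtSubmodule_of_mem_commutant (hx : x ∈ B) {z : H →L[ℂ] H}
    (hz : z ∈ B.commutant) : carrierSubspace B x ∈ Module.End.invtSubmodule z :=
  topologicalClosure_span_mem_invtSubmodule fun _ ⟨b, hb, ξ, hη⟩ ↦
    have hbx : Commute (b * x) z :=
      Commute.mul_left (mem_commutant_iff.1 hz b hb) (mem_commutant_iff.1 hz x hx)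
    ⟨b, hb, z ξ, hη ▸ congr($hbx ξ)⟩

theorem isStarProjection_centralCarrier (B : VonNeumannAlgebra H) (x : H →L[ℂ] H) :
    IsStarProjection (centralCarrier B x) :=
  isStarProjection_starProjection

theorem centralCarrier_mem (hx : x ∈ B) : centralCarrier B x ∈ B := by
  rw [IsStarProjection.mem_iff (isStarProjection_centralCarrier B x), centralCarrier,
    range_starProjection]
  exact fun z hz ↦ carrierSubspace_mem_invtSubmodule_of_mem_commutant hx hz

theorem centralCarrier_mem_commutant : centralCarrier B x ∈ B.commutant := by
  rw [IsStarProjection.mem_iff (isStarProjection_centralCarrier B x), commutant_commutant,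
    centralCarrier, range_starProjection]
  exact fun z hz ↦ carrierSubspace_mem_invtSubmodule hz

theorem centralCarrier_mul_self (B : VonNeumannAlgebra H) (x : H →L[ℂ] H) :
    centralCarrier B x * x = x := by
  ext ξ
  refine starProjection_eq_self_iff.2 (le_topologicalClosure _ (subset_span ?_))
  exact ⟨1, one_mem B, ξ, rfl⟩

theorem carrierSubspace_isOrtho_range {y : H →L[ℂ] H} (hx : IsSelfAdjoint x)
    (hy : IsSelfAdjoint y) (hxy : ∀ b ∈ B, x * b * y = 0) :
    carrierSubspace B x ⟂ (y.range : Submodule ℂ H) := by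
  refine topologicalClosure_minimal _ (span_le.2 ?_) (isClosed_orthogonal _)
  rintro _ ⟨b, hb, ξ, rfl⟩ _ ⟨η, rfl⟩
  have hybx : y * b * x = 0 := by
    simpa [star_mul, hx.star_eq, hy.star_eq, mul_assoc] using
      congr(star $(hxy (star b) (star_mem hb)))
  change inner ℂ (y η) (b (x ξ)) = 0
  rw [← hy.adjoint_eq, adjoint_inner_left]
  simpa using congr(inner ℂ η ($hybx ξ))

theorem centralCarrier_mul_eq_zero {y : H →L[ℂ] H} (hx : IsSelfAdjoint x)
    (hy : IsSelfAdjoint y) (hxy : ∀ b ∈ B, x * b * y = 0) :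
    centralCarrier B x * y = 0 := by
  ext η
  exact (starProjection_apply_eq_zero_iff _).2
    ((carrierSubspace_isOrtho_range hx hy hxy).symm ⟨η, rfl⟩)

end VonNeumannAlgebra

open VonNeumannAlgebra in
theorem vonNeumannAlgebra_centrally_prime_general
    {H : Type*} [NormedAddCommGroup H] [InnerProductSpace ℂ H] [CompleteSpace H]
    (B : VonNeumannAlgebra H) (x y : H →L[ℂ] H)
    (hxB : x ∈ B)
    (hx1 : x ≤ 1) (hy1 : y ≤ 1)
    (hxy : ∀ b ∈ B, x * b * y = 0) :
    ∃ e ∈ B, (∀ b ∈ B, e * b = b * e) ∧ x ≤ e ∧ e ≤ 1 ∧ y ≤ 1 - e ∧ 1 - e ≤ 1 := by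
  have he := isStarProjection_centralCarrier B x
  have hey : centralCarrier B x * y = 0 :=
    centralCarrier_mul_eq_zero (.of_le_one hx1) (.of_le_one hy1) hxy
  refine ⟨centralCarrier B x, centralCarrier_mem hxB,
    fun b hb ↦ (mem_commutant_iff.1 centralCarrier_mem_commutant b hb).symm,
    he.le_of_mul_eq_self hx1 (centralCarrier_mul_self B x), he.le_one,
    he.one_sub.le_of_mul_eq_self hy1 (by rw [sub_mul, one_mul, hey, sub_zero]), he.one_sub.le_one⟩

/-- Every von Neumann algebra is centrally prime: if `x, y ∈ B` with `0 ≤ x, y ≤ 1` and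
`xby = 0` for all `b ∈ B`, then there is a central element `e` of `B` with `x ≤ e ≤ 1`
and `y ≤ 1 - e ≤ 1`. -/
theorem vonNeumannAlgebra_centrally_prime
    {H : Type*} [NormedAddCommGroup H] [InnerProductSpace ℂ H] [CompleteSpace H]
    (B : VonNeumannAlgebra H) (x y : H →L[ℂ] H)
    (hxB : x ∈ B) (hyB : y ∈ B)
    (hx0 : 0 ≤ x) (hx1 : x ≤ 1) (hy0 : 0 ≤ y) (hy1 : y ≤ 1)
    (hxy : ∀ b ∈ B, x * b * y = 0) :
    ∃ e ∈ B, (∀ b ∈ B, e * b = b * e) ∧ x ≤ e ∧ e ≤ 1 ∧ y ≤ 1 - e ∧ 1 - e ≤ 1 :=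
  vonNeumannAlgebra_centrally_prime_general B x y hxB hx1 hy1 hxy
end
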